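/- For every w ∈ ℂ with w ∉ {−1, −2, −3, …}, the series R(w,t) = e^{wt}·Σ_{d≥0} a_d(w)·e^{dt} converges absolutely for every t ∈ H, the function t ↦ R(w,t) is holomorphic on H, and for all t ∈ H it satisfies D⁴R(w,t) − 729·e^t·((D + 1/3)∘(D + 1/3)∘(D + 2/3)∘(D + 2/3))R(w,t) = w⁴·e^{wt}, where D denotes differentiation d/dt in t and (D + c)f = f′ + c·f. -/

import Mathlib

/-- `a_d(w) = (∏_{r=1}^{3d} (3w+r)²) / (∏_{r=1}^{d} (w+r)⁶)`. -/
noncomputable def aFun (d : ℕ) (w : ℂ) : ℂ :=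
  (∏ r ∈ Finset.Icc 1 (3 * d), (3 * w + (r : ℂ)) ^ 2) /
    (∏ r ∈ Finset.Icc 1 d, (w + (r : ℂ)) ^ 6)

/-- `H = {t ∈ ℂ : Re t < −6·log 3}`, so that `729·|e^t| < 1` on `H`. -/
def Hset : Set ℂ := {t : ℂ | t.re < -6 * Real.log 3}

/-- `R(w,t) = e^{wt}·Σ_{d≥0} a_d(w)·e^{dt}`. -/
noncomputable def Rfun (w : ℂ) : ℂ → ℂ :=
  fun t => Complex.exp (w * t) * ∑' d : ℕ, aFun d w * Complex.exp (d * t)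

/-- The operator `(D + c)f = f′ + c·f`, where `D = d/dt`. -/
noncomputable def DOp (c : ℂ) (f : ℂ → ℂ) : ℂ → ℂ :=
  fun t => deriv f t + c * f t

/-!
Write `R(w,t) = ∑ a_d e^{(w+d)t}`. On `H` the series may be differentiated termwise, because
`a_{d+1}/a_d → 729` and `729·|e^t| < 1`; hence a polynomial `P(D)` acts on the `d`-th term as
multiplication by `P(w+d)`. Multiplying by `729·e^t` shifts `d ↦ d+1`, and the recurrence
`a_{d+1}(w+d+1)⁴ = 729·a_d·(w+d+1/3)²(w+d+2/3)²` then cancels every term of `D⁴R` except the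
one for `d = 0`, which is `w⁴e^{wt}`.
-/

open Filter Topology Polynomial Set Bornology

lemma summable_mul_pow_mul_pow_of_le_mul {a r : ℕ → ℝ} {L q : ℝ} (ha : ∀ d, 0 ≤ a d)
    (hrec : ∀ d, a (d + 1) ≤ r d * a d) (hr : Tendsto r atTop (𝓝 L)) (hq : 0 ≤ q)
    (hLq : L * q < 1) (k : ℕ) :
    Summable fun d : ℕ => a d * ((d : ℝ) + 1) ^ k * q ^ d := by
  have hfactor : Tendsto (fun d : ℕ => r d * (1 + 1 / ((d : ℝ) + 1)) ^ k * q) atTop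
      (𝓝 (L * q)) := by
    simpa using (hr.mul (((tendsto_const_nhds (x := (1 : ℝ))).add
      tendsto_one_div_add_atTop_nhds_zero_nat).pow k)).mul_const q
  obtain ⟨ρ, hLρ, hρ⟩ := exists_between hLq
  refine summable_of_ratio_norm_eventually_le hρ ?_
  filter_upwards [hfactor.eventually_le_const hLρ] with d hd
  have hnext : ((d + 1 : ℕ) : ℝ) + 1 = (1 + 1 / ((d : ℝ) + 1)) * ((d : ℝ) + 1) := by
    push_cast; field_simp
  rw [Real.norm_of_nonneg (by have := ha (d + 1); positivity),
    Real.norm_of_nonneg (by have := ha d; positivity)]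
  calc a (d + 1) * (((d + 1 : ℕ) : ℝ) + 1) ^ k * q ^ (d + 1)
      ≤ r d * a d * (((d + 1 : ℕ) : ℝ) + 1) ^ k * q ^ (d + 1) := by gcongr; exact hrec d
    _ = (r d * (1 + 1 / ((d : ℝ) + 1)) ^ k * q) * (a d * ((d : ℝ) + 1) ^ k * q ^ d) := by
      rw [hnext, mul_pow, pow_succ]; ring
    _ ≤ ρ * (a d * ((d : ℝ) + 1) ^ k * q ^ d) := by
      gcongr; have := ha d; positivity

lemma Polynomial.norm_eval_le_mul_one_add_norm_pow {R : Type*} [SeminormedRing R] [NormOneClass R]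
    (P : R[X]) (z : R) :
    ‖P.eval z‖ ≤
      (∑ i ∈ Finset.range (P.natDegree + 1), ‖P.coeff i‖) * (1 + ‖z‖) ^ P.natDegree := by
  rw [eval_eq_sum_range, Finset.sum_mul]
  refine (norm_sum_le _ _).trans (Finset.sum_le_sum fun i hi => ?_)
  have hi : i ≤ P.natDegree := Nat.lt_succ_iff.mp (Finset.mem_range.mp hi)
  calc ‖P.coeff i * z ^ i‖ ≤ ‖P.coeff i‖ * ‖z‖ ^ i :=
        (norm_mul_le _ _).trans (by gcongr; exact norm_pow_le _ _)
    _ ≤ ‖P.coeff i‖ * (1 + ‖z‖) ^ P.natDegree := by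
      gcongr
      calc ‖z‖ ^ i ≤ (1 + ‖z‖) ^ i := by gcongr; linarith
        _ ≤ (1 + ‖z‖) ^ P.natDegree := pow_le_pow_right₀ (by linarith [norm_nonneg z]) hi

lemma Complex.norm_exp_add_natCast_mul (w y : ℂ) (d : ℕ) :
    ‖exp ((w + d) * y)‖ = Real.exp (w * y).re * Real.exp y.re ^ d := by
  rw [add_mul, exp_add, exp_nat_mul, norm_mul, norm_pow, norm_exp, norm_exp]

def SummableOnHalfPlane (a : ℕ → ℂ) (σ : ℝ) : Prop :=
  ∀ k : ℕ, ∀ c < σ, Summable fun d : ℕ => ‖a d‖ * ((d : ℝ) + 1) ^ k * Real.exp c ^ d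

/-- `P(D)` applied termwise to `∑ a_d e^{(w+d)t}`. -/
noncomputable def expPolySum (a : ℕ → ℂ) (w : ℂ) (P : ℂ[X]) (t : ℂ) : ℂ :=
  ∑' d : ℕ, a d * P.eval (w + d) * Complex.exp ((w + d) * t)

section expPolySum

variable {a : ℕ → ℂ} {w : ℂ} {σ : ℝ}

lemma norm_expPolySum_term_le (P : ℂ[X]) (d : ℕ) {y : ℂ} {c M : ℝ} (hy : y.re ≤ c)
    (hM : ‖y‖ ≤ M) :
    ‖a d * P.eval (w + d) * Complex.exp ((w + d) * y)‖ ≤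
      (∑ i ∈ Finset.range (P.natDegree + 1), ‖P.coeff i‖) * (1 + ‖w‖) ^ P.natDegree *
        Real.exp (‖w‖ * M) * (‖a d‖ * ((d : ℝ) + 1) ^ P.natDegree * Real.exp c ^ d) := by
  have hwd : 1 + ‖w + d‖ ≤ (1 + ‖w‖) * ((d : ℝ) + 1) := by
    have := norm_add_le w d
    rw [Complex.norm_natCast] at this
    nlinarith [norm_nonneg w, d.cast_nonneg (α := ℝ)]
  have hwy : (w * y).re ≤ ‖w‖ * M :=
    (Complex.re_le_norm _).trans (norm_mul w y ▸ by gcongr)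
  rw [norm_mul, norm_mul, Complex.norm_exp_add_natCast_mul]
  calc ‖a d‖ * ‖P.eval (w + d)‖ * (Real.exp (w * y).re * Real.exp y.re ^ d)
      ≤ ‖a d‖ * ((∑ i ∈ Finset.range (P.natDegree + 1), ‖P.coeff i‖) *
          ((1 + ‖w‖) * ((d : ℝ) + 1)) ^ P.natDegree) *
          (Real.exp (‖w‖ * M) * Real.exp c ^ d) := by
        gcongr
        exact (P.norm_eval_le_mul_one_add_norm_pow _).trans (by gcongr)
    _ = _ := by rw [mul_pow]; ring

lemma summable_norm_expPolySum_term (ha : SummableOnHalfPlane a σ)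
    (P : ℂ[X]) {t : ℂ} (ht : t.re < σ) :
    Summable fun d : ℕ => ‖a d * P.eval (w + d) * Complex.exp ((w + d) * t)‖ :=
  .of_nonneg_of_le (fun _ => norm_nonneg _) (fun d => norm_expPolySum_term_le P d le_rfl le_rfl)
    ((ha _ _ ht).mul_left _)

lemma hasDerivAt_expPolySum (ha : SummableOnHalfPlane a σ)
    (P : ℂ[X]) {t : ℂ} (ht : t.re < σ) :
    HasDerivAt (expPolySum a w P) (expPolySum a w (P * X) t) t := by
  set ε := (σ - t.re) / 2
  have hε : 0 < ε := by simp only [ε]; linarith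
  have hball (y : ℂ) (hy : y ∈ Metric.ball t ε) : y.re ≤ t.re + ε ∧ ‖y‖ ≤ ‖t‖ + ε := by
    rw [Metric.mem_ball, dist_eq_norm] at hy
    refine ⟨?_, ?_⟩
    · linarith [(abs_le.mp (Complex.abs_re_le_norm (y - t))).2, Complex.sub_re y t]
    · linarith [norm_sub_norm_le y t]
  refine hasDerivAt_tsum_of_isPreconnected
    ((ha _ (t.re + ε) (by simp only [ε]; linarith)).mul_left _)
    Metric.isOpen_ball (convex_ball t ε).isPreconnected (fun d y _ => ?_)
    (fun d y hy => norm_expPolySum_term_le (P * X) d (hball y hy).1 (hball y hy).2)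
    (Metric.mem_ball_self hε) (summable_norm_expPolySum_term ha P ht).of_norm
    (Metric.mem_ball_self hε)
  simpa [mul_assoc, mul_comm, mul_left_comm] using
    (((hasDerivAt_id y).const_mul (w + d)).cexp).const_mul (a d * P.eval (w + d))

lemma Set.EqOn.deriv_expPolySum (ha : SummableOnHalfPlane a σ)
    {f : ℂ → ℂ} {P : ℂ[X]} (h : EqOn f (expPolySum a w P) {t | t.re < σ}) :
    EqOn (_root_.deriv f) (expPolySum a w (P * X)) {t | t.re < σ} := fun _ ht =>
  (h.deriv (isOpen_lt Complex.continuous_re continuous_const) ht).trans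
    (hasDerivAt_expPolySum ha P ht).deriv

lemma Set.EqOn.DOp_expPolySum (ha : SummableOnHalfPlane a σ)
    {f : ℂ → ℂ} {P : ℂ[X]} (h : EqOn f (expPolySum a w P) {t | t.re < σ}) (c : ℂ) :
    EqOn (DOp c f) (expPolySum a w (P * (X + C c))) {t | t.re < σ} := fun t ht => by
  have hP := (summable_norm_expPolySum_term ha P (w := w) ht).of_norm
  have hPX := (summable_norm_expPolySum_term ha (P * X) (w := w) ht).of_norm
  rw [DOp, h.deriv_expPolySum ha ht, h ht, expPolySum, expPolySum, expPolySum,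
    ← tsum_mul_left, ← hPX.tsum_add (hP.mul_left c)]
  congr 1 with d
  simp only [eval_mul, eval_add, eval_X, eval_C]
  ring

lemma expPolySum_eq_add_of_succ (ha : SummableOnHalfPlane a σ)
    {P Q : ℂ[X]} {μ : ℂ}
    (hrec : ∀ d : ℕ, a (d + 1) * P.eval (w + d + 1) = μ * a d * Q.eval (w + d))
    {t : ℂ} (ht : t.re < σ) :
    expPolySum a w P t =
      a 0 * P.eval w * Complex.exp (w * t) + μ * Complex.exp t * expPolySum a w Q t := by
  rw [expPolySum, (summable_norm_expPolySum_term ha P ht).of_norm.tsum_eq_zero_add, expPolySum,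
    ← tsum_mul_left]
  congr 1
  · simp
  congr 1 with d
  rw [Nat.cast_succ, ← add_assoc, mul_assoc, ← mul_assoc (a _), hrec, add_mul _ 1, one_mul,
    Complex.exp_add]
  ring

end expPolySum

lemma aFun_zero (w : ℂ) : aFun 0 w = 1 := by simp [aFun]

noncomputable def aRatio (z : ℂ) : ℂ := (3 * z - 2) ^ 2 * (3 * z - 1) ^ 2 * (3 * z) ^ 2 / z ^ 6

lemma aFun_succ (d : ℕ) (w : ℂ) : aFun (d + 1) w = aFun d w * aRatio (w + d + 1) := by
  have hnum : ∏ r ∈ Finset.Icc 1 (3 * (d + 1)), (3 * w + (r : ℂ)) ^ 2 =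
      (∏ r ∈ Finset.Icc 1 (3 * d), (3 * w + (r : ℂ)) ^ 2) *
        ((3 * (w + d + 1) - 2) ^ 2 * (3 * (w + d + 1) - 1) ^ 2 * (3 * (w + d + 1)) ^ 2) := by
    rw [show 3 * (d + 1) = 3 * d + 1 + 1 + 1 by ring, Finset.prod_Icc_succ_top (by omega),
      Finset.prod_Icc_succ_top (by omega), Finset.prod_Icc_succ_top (by omega)]
    push_cast
    ring
  have hden : ∏ r ∈ Finset.Icc 1 (d + 1), (w + (r : ℂ)) ^ 6 =
      (∏ r ∈ Finset.Icc 1 d, (w + (r : ℂ)) ^ 6) * (w + d + 1) ^ 6 := by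
    rw [Finset.prod_Icc_succ_top (by omega)]
    push_cast
    ring
  rw [aFun, aFun, hnum, hden, aRatio, div_mul_div_comm]

lemma aRatio_mul_pow_four {z : ℂ} (hz : z ≠ 0) :
    aRatio z * z ^ 4 = 729 * (z - 2 / 3) ^ 2 * (z - 1 / 3) ^ 2 := by
  rw [aRatio]
  field_simp
  ring

lemma tendsto_aRatio_cobounded : Tendsto aRatio (cobounded ℂ) (𝓝 729) := by
  have hcont : Tendsto (fun u : ℂ => (3 - 2 * u) ^ 2 * (3 - u) ^ 2 * 9) (𝓝 0) (𝓝 729) := by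
    convert (by fun_prop : Continuous fun u : ℂ => (3 - 2 * u) ^ 2 * (3 - u) ^ 2 * 9).tendsto 0
      using 2
    norm_num
  refine (hcont.comp tendsto_inv₀_cobounded).congr' ?_
  filter_upwards [eventually_ne_cobounded 0] with z hz
  simp only [Function.comp, aRatio]
  field_simp
  ring

lemma aFun_succ_mul_pow_four {w : ℂ} (hw : ∀ n : ℕ, w ≠ -((n : ℂ) + 1)) (d : ℕ) :
    aFun (d + 1) w * (w + d + 1) ^ 4 =
      729 * aFun d w * (w + d + 1 / 3) ^ 2 * (w + d + 2 / 3) ^ 2 := by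
  have hz : w + d + 1 ≠ 0 := fun h => hw d (by linear_combination h)
  rw [aFun_succ, mul_assoc, aRatio_mul_pow_four hz]
  ring

lemma mul_exp_lt_one_of_lt {c : ℝ} (hc : c < -6 * Real.log 3) : 729 * Real.exp c < 1 := by
  have h729 : (729 : ℝ) = Real.exp (6 * Real.log 3) := by
    rw [show (6 : ℝ) = (6 : ℕ) by norm_num, Real.exp_nat_mul, Real.exp_log (by norm_num)]
    norm_num
  rw [h729, ← Real.exp_add, Real.exp_lt_one_iff]
  linarith

lemma summableOnHalfPlane_aFun (w : ℂ) : SummableOnHalfPlane (aFun · w) (-6 * Real.log 3) := by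
  intro k c hc
  have hshift : Tendsto (fun d : ℕ => w + d + 1) atTop (cobounded ℂ) :=
    (tendsto_add_const_cobounded 1).comp
      ((tendsto_const_add_cobounded w).comp tendsto_natCast_atTop_cobounded)
  exact summable_mul_pow_mul_pow_of_le_mul (r := fun d => ‖aRatio (w + d + 1)‖)
    (fun _ => norm_nonneg _) (fun d => (by rw [aFun_succ, norm_mul, mul_comm]))
    (by simpa using (tendsto_aRatio_cobounded.comp hshift).norm)
    (Real.exp_pos c).le (mul_exp_lt_one_of_lt hc) k

lemma Rfun_eq_expPolySum (w : ℂ) : Rfun w = expPolySum (aFun · w) w 1 := by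
  ext t
  rw [Rfun, expPolySum, ← tsum_mul_left]
  congr 1 with d
  rw [eval_one, add_mul, Complex.exp_add]
  ring

/-- For `w` not a negative integer: the series defining `R(w,·)` converges absolutely on `H`,
`t ↦ R(w,t)` is holomorphic on `H`, and it satisfies
`D⁴R − 729·e^t·(D+1/3)²(D+2/3)²R = w⁴·e^{wt}` on `H`. -/
theorem Rfun_picard_fuchs (w : ℂ) (hw : ∀ n : ℕ, w ≠ -((n : ℂ) + 1)) :
    (∀ t ∈ Hset, Summable fun d : ℕ => ‖aFun d w * Complex.exp (d * t)‖) ∧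
    DifferentiableOn ℂ (Rfun w) Hset ∧
    (∀ t ∈ Hset,
      deriv (deriv (deriv (deriv (Rfun w)))) t -
          729 * Complex.exp t *
            (DOp (1 / 3) (DOp (1 / 3) (DOp (2 / 3) (DOp (2 / 3) (Rfun w))))) t =
        w ^ 4 * Complex.exp (w * t)) := by
  have ha := summableOnHalfPlane_aFun w
  have hR : EqOn (Rfun w) (expPolySum (aFun · w) w 1) {t | t.re < -6 * Real.log 3} :=
    fun t _ => by rw [Rfun_eq_expPolySum]
  refine ⟨fun t ht => ?_, fun t ht => ?_, fun t ht => ?_⟩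
  · simpa [Complex.exp_nat_mul, Complex.norm_exp] using ha 0 t.re ht
  · rw [Rfun_eq_expPolySum]
    exact (hasDerivAt_expPolySum ha 1 ht).differentiableAt.differentiableWithinAt
  · have hrec : ∀ d : ℕ, aFun (d + 1) w * eval (w + d + 1) (1 * X * X * X * X) =
        729 * aFun d w * eval (w + d)
          (1 * (X + C (2 / 3)) * (X + C (2 / 3)) * (X + C (1 / 3)) * (X + C (1 / 3))) := by
      intro d
      simp only [eval_mul, eval_add, eval_X, eval_C, eval_one]
      linear_combination aFun_succ_mul_pow_four hw d
    rw [(((hR.deriv_expPolySum ha).deriv_expPolySum ha).deriv_expPolySum ha).deriv_expPolySum ha ht,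
      (((hR.DOp_expPolySum ha (2 / 3)).DOp_expPolySum ha (2 / 3)).DOp_expPolySum ha
        (1 / 3)).DOp_expPolySum ha (1 / 3) ht, expPolySum_eq_add_of_succ ha hrec ht, aFun_zero]
    simp only [eval_mul, eval_X, eval_one]
    ring
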